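/- Let k > 2 be an integer and let r = R(k+1,k+1) be the Ramsey number, i.e., the least integer such that every simple graph on r vertices contains a clique of size k+1 or an independent set of size k+1. Then every 2-connected finite simple graph G that has a minor isomorphic to the complete bipartite graph K_{2,r} contains a parallel minor isomorphic to K'_{2,k} or to the complete graph K_k. -/

import Mathlib

open SimpleGraph

/-- `H` is (isomorphic to) a parallel minor of `G`: `H` is obtained from `G` by contracting
edges and then deleting all resulting loops and parallel edges.  The map `f` sends each vertex
of `G` to the vertex of `H` it gets contracted onto; each fibre must induce a connected
subgraph of `G`, and adjacency in `H` is exactly inherited adjacency between distinct fibres. -/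
def HasParallelMinor {V W : Type} (G : SimpleGraph V) (H : SimpleGraph W) : Prop :=
  ∃ f : V → W, Function.Surjective f ∧
    (∀ w : W, (G.induce (f ⁻¹' {w})).Connected) ∧
    ∀ w₁ w₂ : W, H.Adj w₁ w₂ ↔ w₁ ≠ w₂ ∧ ∃ v₁ v₂ : V, f v₁ = w₁ ∧ f v₂ = w₂ ∧ G.Adj v₁ v₂

/-- `G` contains a subgraph isomorphic to `H`. -/
def ContainsSubgraph {V W : Type} (G : SimpleGraph V) (H : SimpleGraph W) : Prop :=
  ∃ f : W ↪ V, ∀ a b : W, H.Adj a b → G.Adj (f a) (f b)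

/-- `H` is (isomorphic to) a minor of `G`: a subgraph of a parallel minor of `G`. -/
def HasMinor {V W : Type} (G : SimpleGraph V) (H : SimpleGraph W) : Prop :=
  ∃ (n : ℕ) (M : SimpleGraph (Fin n)), HasParallelMinor G M ∧ ContainsSubgraph M H

/-- A graph is `k`-connected if it has more than `k` vertices and deleting any fewer than `k`
vertices leaves it connected. -/
def KConnected {V : Type} [Fintype V] (k : ℕ) (G : SimpleGraph V) : Prop :=
  k < Fintype.card V ∧ ∀ S : Set V, S.ncard < k → (G.induce Sᶜ).Connected

/-- A graph is internally 4-connected if it is 3-connected and for every separating set `S` of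
3 vertices, `G - S` has exactly two components, one of which is a single vertex. -/
def InternallyFourConnected {V : Type} [Fintype V] (G : SimpleGraph V) : Prop :=
  KConnected 3 G ∧ ∀ S : Set V, S.ncard = 3 → ¬ (G.induce Sᶜ).Connected →
    ∃ v ∈ Sᶜ, (∀ u : V, G.Adj v u → u ∈ S) ∧ (G.induce (Sᶜ \ {v})).Connected

/-- The join of two graphs: disjoint union plus all edges between the two sides. -/
def graphJoin {V W : Type} (G : SimpleGraph V) (H : SimpleGraph W) : SimpleGraph (V ⊕ W) where
  Adj x y := match x, y with
    | Sum.inl a, Sum.inl b => G.Adj a b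
    | Sum.inr a, Sum.inr b => H.Adj a b
    | _, _ => True
  symm := ⟨by rintro (a | a) (b | b) h <;> first | exact G.adj_symm h | exact H.adj_symm h | trivial⟩
  loopless := ⟨by rintro (a | a) h <;> first | exact G.irrefl h | exact H.irrefl h⟩

/-- `K'_{m,k}`: the complete bipartite graph `K_{m,k}` with all edges added among the `m`
vertices of degree `k`. -/
def KPrime (m k : ℕ) : SimpleGraph (Fin m ⊕ Fin k) :=
  graphJoin (⊤ : SimpleGraph (Fin m)) (⊥ : SimpleGraph (Fin k))

/-- The fan `F_k`: a path on `k` vertices joined to one new vertex. -/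
def fanGraph (k : ℕ) : SimpleGraph (Fin k ⊕ Fin 1) :=
  graphJoin (SimpleGraph.pathGraph k) (⊤ : SimpleGraph (Fin 1))

/-- The wheel `W_k`: a cycle on `k` vertices joined to one new vertex (the hub). -/
def wheelGraph (k : ℕ) : SimpleGraph (Fin k ⊕ Fin 1) :=
  graphJoin (SimpleGraph.cycleGraph k) (⊤ : SimpleGraph (Fin 1))

/-- The double fan `DF_k`: a path on `k` vertices joined to two mutually adjacent new vertices. -/
def doubleFanGraph (k : ℕ) : SimpleGraph (Fin k ⊕ Fin 2) :=
  graphJoin (SimpleGraph.pathGraph k) (⊤ : SimpleGraph (Fin 2))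

/-- The triple fan `TF_k`: a path on `k` vertices joined to three mutually adjacent new
vertices. -/
def tripleFanGraph (k : ℕ) : SimpleGraph (Fin k ⊕ Fin 3) :=
  graphJoin (SimpleGraph.pathGraph k) (⊤ : SimpleGraph (Fin 3))

/-- The double wheel `D_k`: a cycle on `k` vertices joined to two nonadjacent hubs. -/
def doubleWheelGraph (k : ℕ) : SimpleGraph (Fin k ⊕ Fin 2) :=
  graphJoin (SimpleGraph.cycleGraph k) (⊥ : SimpleGraph (Fin 2))

/-- The double wheel with axle `D'_k`: a cycle on `k` vertices joined to two adjacent hubs. -/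
def doubleWheelAxleGraph (k : ℕ) : SimpleGraph (Fin k ⊕ Fin 2) :=
  graphJoin (SimpleGraph.cycleGraph k) (⊤ : SimpleGraph (Fin 2))

/-- The zigzag ladder `Z_k` with `2k` rungs: the square of the cycle `C_{2k}`. -/
def zigzagLadder (k : ℕ) : SimpleGraph (ZMod (2 * k)) :=
  SimpleGraph.circulantGraph ({1, 2} : Set (ZMod (2 * k)))

/-- The Möbius zigzag ladder `M_k` with `2k+1` rungs: the square of the cycle `C_{2k+1}`. -/
def mobiusZigzagLadder (k : ℕ) : SimpleGraph (ZMod (2 * k + 1)) :=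
  SimpleGraph.circulantGraph ({1, 2} : Set (ZMod (2 * k + 1)))

/-- `RamseyProp r k` : every simple graph on `r` vertices contains a clique of size `k`
or an independent set of size `k`. -/
def RamseyProp (r k : ℕ) : Prop :=
  ∀ G : SimpleGraph (Fin r),
    (∃ s : Finset (Fin r), G.IsNClique k s) ∨ (∃ s : Finset (Fin r), Gᶜ.IsNClique k s)

/-- The (diagonal) Ramsey number `R(k,k)`. -/
noncomputable def ramseyNumber (k : ℕ) : ℕ := sInf {r | RamseyProp r k}

/-! Grow the branch sets of a `K_{2,r}` model in the connected graph `G` until they cover every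
vertex; this makes `G` contract onto a graph `Q` on the vertices of `K_{2,r}` that contains
`K_{2,r}`. By Ramsey's theorem the `r` vertices of the large side of `Q` contain `k + 1` vertices
spanning a clique or an independent set. Keep `k` of them and the two small-side vertices, and
merge every other large-side vertex into one small-side vertex: the result is the join of `K_2`
with `K_k` or with `k` isolated vertices, that is `K_{k+2}` (which contracts onto `K_k`) or
`K'_{2,k}`. -/

namespace SimpleGraph

variable {V W U : Type} {G : SimpleGraph V}

def contract (G : SimpleGraph V) (f : V → W) : SimpleGraph W where
  Adj w₁ w₂ := w₁ ≠ w₂ ∧ ∃ v₁ v₂, f v₁ = w₁ ∧ f v₂ = w₂ ∧ G.Adj v₁ v₂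
  symm := ⟨fun _ _ ⟨hne, v₁, v₂, h₁, h₂, h⟩ => ⟨hne.symm, v₂, v₁, h₂, h₁, h.symm⟩⟩
  loopless := ⟨fun _ h => h.1 rfl⟩

theorem contract_comp (f : V → W) (g : W → U) :
    G.contract (g ∘ f) = (G.contract f).contract g := by
  ext u₁ u₂
  simp only [contract]
  constructor
  · rintro ⟨hne, v₁, v₂, rfl, rfl, h⟩
    exact ⟨hne, f v₁, f v₂, rfl, rfl, fun he => hne (congrArg g he), v₁, v₂, rfl, rfl, h⟩
  · rintro ⟨hne, _, _, rfl, rfl, -, v₁, v₂, rfl, rfl, h⟩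
    exact ⟨hne, v₁, v₂, rfl, rfl, h⟩

theorem connected_induce_preimage {f : V → W} (hf : ∀ w, (G.induce (f ⁻¹' {w})).Connected)
    {s : Set W} (hs : ((G.contract f).induce s).Connected) :
    (G.induce (f ⁻¹' s)).Connected := by
  have hfibre : ∀ (a : s) (x y : f ⁻¹' s), f x = a → f y = a →
      (G.induce (f ⁻¹' s)).Reachable x y := by
    rintro ⟨a, ha⟩ ⟨x, -⟩ ⟨y, -⟩ (hx : f x = a) (hy : f y = a)
    have hsub : f ⁻¹' {a} ⊆ f ⁻¹' s := by rintro v (rfl : f v = a); exact ha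
    exact ((hf a).preconnected ⟨x, hx⟩ ⟨y, hy⟩).map (G.induceHomOfLE hsub).toHom
  have hwalk : ∀ (a b : s) (p : ((G.contract f).induce s).Walk a b) (x y : f ⁻¹' s),
      f x = a → f y = b → (G.induce (f ⁻¹' s)).Reachable x y := by
    intro a b p
    induction p with
    | nil => exact fun x y hx hy => hfibre _ x y hx hy
    | @cons a c b hac p ih =>
      intro x y hx hy
      obtain ⟨-, v₁, v₂, h₁, h₂, hv⟩ : (G.contract f).Adj a c := hac
      have hv₁ : v₁ ∈ f ⁻¹' s := by simp only [Set.mem_preimage, h₁, Subtype.coe_prop]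
      have hv₂ : v₂ ∈ f ⁻¹' s := by simp only [Set.mem_preimage, h₂, Subtype.coe_prop]
      have hv' : (G.induce (f ⁻¹' s)).Adj ⟨v₁, hv₁⟩ ⟨v₂, hv₂⟩ := hv
      exact (hfibre a x ⟨v₁, hv₁⟩ hx h₁).trans (hv'.reachable.trans (ih ⟨v₂, hv₂⟩ y h₂ hy))
  obtain ⟨a, ha⟩ := hs.nonempty
  obtain ⟨v, hv⟩ := (hf a).nonempty
  have hvs : f v ∈ s := by rwa [show f v = a from hv]
  have : Nonempty (f ⁻¹' s) := ⟨⟨v, hvs⟩⟩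
  exact ⟨fun x y => hwalk _ _ (hs.preconnected ⟨f x, x.2⟩ ⟨f y, y.2⟩).some x y rfl rfl⟩

theorem connected_induce_insert_inter_preimage_update [DecidableEq V] {U : Set V} {h : V → W}
    (hU : ∀ w, (G.induce (U ∩ h ⁻¹' {w})).Connected) {u v : V} (hu : u ∈ U) (hv : v ∉ U)
    (huv : G.Adj u v) (w : W) :
    (G.induce (insert v U ∩ Function.update h v (h u) ⁻¹' {w})).Connected := by
  by_cases hw : h u = w
  · have hset : insert v U ∩ Function.update h v (h u) ⁻¹' {w} = (U ∩ h ⁻¹' {w}) ∪ {v} := by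
      ext x
      by_cases hx : x = v
      · simp [hx, hw]
      · simp [hx]
    rw [hset]
    refine connected_induce_union (hU w).preconnected ?_ ⟨hu, hw⟩ rfl huv
    rw [induce_singleton_eq_top]
    exact connected_top.preconnected
  · have hset : insert v U ∩ Function.update h v (h u) ⁻¹' {w} = U ∩ h ⁻¹' {w} := by
      ext x
      by_cases hx : x = v
      · simp [hx, hw, hv]
      · simp [hx]
    rw [hset]
    exact hU w

theorem Connected.exists_extend_connected_fibres [Finite V] (hG : G.Connected) {U : Set V}
    {h₀ : V → W} (hU : ∀ w, (G.induce (U ∩ h₀ ⁻¹' {w})).Connected) :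
    ∃ h : V → W, Set.EqOn h h₀ U ∧ ∀ w, (G.induce (h ⁻¹' {w})).Connected := by
  classical
  induction hn : Uᶜ.ncard generalizing U h₀ with
  | zero =>
    obtain rfl : U = Set.univ := Set.compl_empty_iff.mp ((Set.ncard_eq_zero).mp hn)
    exact ⟨h₀, Set.eqOn_refl _ _, fun w => Set.univ_inter (h₀ ⁻¹' {w}) ▸ hU w⟩
  | succ n ih =>
    obtain ⟨v, hv⟩ : Uᶜ.Nonempty := Set.nonempty_of_ncard_ne_zero (by omega)
    obtain ⟨⟨u, hu, -⟩⟩ := (hU (h₀ v)).nonempty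
    obtain ⟨d, -, hd₁, hd₂⟩ := (hG.preconnected u v).some.exists_boundary_dart U hu hv
    have hcompl : (insert d.snd U)ᶜ = Uᶜ \ {d.snd} := by
      ext x
      simp [and_comm]
    obtain ⟨h, heq, hh⟩ := ih (connected_induce_insert_inter_preimage_update hU hd₁ hd₂ d.adj)
      (by rw [hcompl, Set.ncard_sdiff_singleton_of_mem hd₂, hn, Nat.add_sub_cancel])
    refine ⟨h, fun x hx => ?_, hh⟩
    rw [heq (Set.mem_insert_of_mem _ hx), Function.update_of_ne (ne_of_mem_of_not_mem hx hd₂)]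

theorem connected_induce_of_completeBipartiteGraph_le {α β : Type} {Q : SimpleGraph (α ⊕ β)}
    (hQ : completeBipartiteGraph α β ≤ Q) {s : Set (α ⊕ β)} {a : α} {b : β}
    (ha : Sum.inl a ∈ s) (hb : Sum.inr b ∈ s) : (Q.induce s).Connected := by
  have hadj : ∀ {x y : s}, (completeBipartiteGraph α β).Adj x y → (Q.induce s).Adj x y :=
    fun h => hQ h
  rw [connected_iff_exists_forall_reachable]
  refine ⟨⟨_, ha⟩, ?_⟩
  rintro ⟨a' | b', hx⟩
  · exact (hadj (x := ⟨_, ha⟩) (y := ⟨_, hb⟩) (by simp)).reachable.trans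
      (hadj (by simp)).reachable
  · exact (hadj (by simp)).reachable

theorem graphJoin_top_top {α β : Type} :
    graphJoin (⊤ : SimpleGraph α) (⊤ : SimpleGraph β) = ⊤ := by
  ext (a | b) (a' | b') <;> simp [graphJoin]

theorem exists_isNClique_or_isNClique_compl [DecidableEq V] (G : SimpleGraph V) (a b : ℕ)
    (t : Finset V) (ht : (a + b).choose a ≤ t.card) :
    (∃ s ⊆ t, G.IsNClique a s) ∨ ∃ s ⊆ t, Gᶜ.IsNClique b s := by
  induction a generalizing b t with
  | zero => exact Or.inl ⟨∅, t.empty_subset, isNClique_empty.mpr rfl⟩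
  | succ a iha =>
    induction b generalizing t with
    | zero => exact Or.inr ⟨∅, t.empty_subset, isNClique_empty.mpr rfl⟩
    | succ b ihb =>
      classical
      have hr : (a + 1 + (b + 1)).choose (a + 1) =
          (a + (b + 1)).choose a + (a + 1 + b).choose (a + 1) := by
        rw [show a + 1 + (b + 1) = a + b + 1 + 1 by omega, Nat.choose_succ_succ,
          show a + (b + 1) = a + b + 1 by omega, show a + 1 + b = a + b + 1 by omega]
      obtain ⟨v, hv⟩ : t.Nonempty :=
        Finset.card_pos.mp ((Nat.choose_pos (by omega)).trans_le ht)
      set N := (t.erase v).filter (G.Adj v)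
      set M := (t.erase v).filter (¬ G.Adj v ·)
      have hN : N ⊆ t := (Finset.filter_subset _ _).trans (Finset.erase_subset v t)
      have hM : M ⊆ t := (Finset.filter_subset _ _).trans (Finset.erase_subset v t)
      have hcard : N.card + M.card + 1 = t.card := by
        rw [Finset.card_filter_add_card_filter_not, Finset.card_erase_add_one hv]
      rcases (by omega : (a + (b + 1)).choose a ≤ N.card ∨ (a + 1 + b).choose (a + 1) ≤ M.card)
        with hNc | hMc
      · rcases iha (b + 1) N hNc with ⟨s, hsN, hs⟩ | ⟨s, hsN, hs⟩
        · refine Or.inl ⟨insert v s, Finset.insert_subset hv (hsN.trans hN), hs.insert ?_⟩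
          exact fun x hx => (Finset.mem_filter.mp (hsN hx)).2
        · exact Or.inr ⟨s, hsN.trans hN, hs⟩
      · rcases ihb M hMc with ⟨s, hsM, hs⟩ | ⟨s, hsM, hs⟩
        · exact Or.inl ⟨s, hsM.trans hM, hs⟩
        · refine Or.inr ⟨insert v s, Finset.insert_subset hv (hsM.trans hM), hs.insert ?_⟩
          intro x hx
          obtain ⟨hxt, hvx⟩ := Finset.mem_filter.mp (hsM hx)
          exact (compl_adj G v x).mpr ⟨(Finset.ne_of_mem_erase hxt).symm, hvx⟩

end SimpleGraph

theorem ramseyProp_choose (n : ℕ) : RamseyProp ((n + n).choose n) n := fun G => by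
  simpa using G.exists_isNClique_or_isNClique_compl n n Finset.univ (by simp)

theorem ramseyProp_ramseyNumber (n : ℕ) : RamseyProp (ramseyNumber n) n :=
  Nat.sInf_mem (s := {r | RamseyProp r n}) ⟨_, ramseyProp_choose n⟩

section

variable {V W U α β κ : Type} {G : SimpleGraph V}

theorem hasParallelMinor_iff {H : SimpleGraph W} :
    HasParallelMinor G H ↔ ∃ f : V → W, Function.Surjective f ∧
      (∀ w, (G.induce (f ⁻¹' {w})).Connected) ∧ H = G.contract f := by
  refine exists_congr fun f => and_congr_right fun _ => and_congr_right fun _ => ⟨fun h => ?_, ?_⟩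
  · ext w₁ w₂
    exact h w₁ w₂
  · rintro rfl w₁ w₂
    exact Iff.rfl

theorem HasParallelMinor.trans {M : SimpleGraph W} {H : SimpleGraph U}
    (hGM : HasParallelMinor G M) (hMH : HasParallelMinor M H) : HasParallelMinor G H := by
  obtain ⟨f, hfs, hfc, rfl⟩ := hasParallelMinor_iff.mp hGM
  obtain ⟨g, hgs, hgc, rfl⟩ := hasParallelMinor_iff.mp hMH
  refine hasParallelMinor_iff.mpr ⟨g ∘ f, hgs.comp hfs, fun u => ?_, (contract_comp f g).symm⟩
  exact connected_induce_preimage hfc (hgc u)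

theorem HasMinor.exists_hasParallelMinor_le [Finite V] [Nonempty W] {H : SimpleGraph W}
    (hG : G.Connected) (hGH : HasMinor G H) : ∃ Q : SimpleGraph W, H ≤ Q ∧ HasParallelMinor G Q := by
  classical
  obtain ⟨n, M, ⟨f, hfs, hfc, hM⟩, g, hg⟩ := hGH
  set h₀ : V → W := fun v => Function.invFun g (f v)
  have hfibre : ∀ w, f ⁻¹' {g w} = f ⁻¹' Set.range g ∩ h₀ ⁻¹' {w} := by
    intro w
    ext v
    simp only [Set.mem_preimage, Set.mem_singleton_iff, Set.mem_inter_iff, Set.mem_range, h₀]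
    constructor
    · intro hv
      exact ⟨⟨w, hv.symm⟩, hv ▸ Function.leftInverse_invFun g.injective w⟩
    · rintro ⟨⟨y, hy⟩, rfl⟩
      rw [← hy, Function.leftInverse_invFun g.injective y]
  obtain ⟨h, heq, hh⟩ := hG.exists_extend_connected_fibres fun w => hfibre w ▸ hfc (g w)
  have hgf : ∀ v w, f v = g w → h v = w := by
    intro v w hv
    have hv' : v ∈ f ⁻¹' Set.range g ∩ h₀ ⁻¹' {w} := hfibre w ▸ hv
    exact (heq hv'.1).trans hv'.2
  refine ⟨G.contract h, fun a b hab => ?_, hasParallelMinor_iff.mpr ⟨h, fun w => ?_, hh, rfl⟩⟩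
  · obtain ⟨-, v₁, v₂, h₁, h₂, hadj⟩ := (hM _ _).mp (hg a b hab)
    exact ⟨H.ne_of_adj hab, v₁, v₂, hgf _ _ h₁, hgf _ _ h₂, hadj⟩
  · obtain ⟨v, hv⟩ := hfs (g w)
    exact ⟨v, hgf v w hv⟩

theorem KConnected.connected [Fintype V] {k : ℕ} (hk : 0 < k) (hG : KConnected k G) :
    G.Connected := by
  have h := hG.2 ∅ (by simpa using hk)
  rw [Set.compl_empty] at h
  exact (induceUnivIso G).connected_iff.mp h

theorem hasParallelMinor_top_of_surjective {f : α → β} (hf : Function.Surjective f) :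
    HasParallelMinor (⊤ : SimpleGraph α) (⊤ : SimpleGraph β) := by
  refine ⟨f, hf, fun b => ?_, fun b₁ b₂ => ?_⟩
  · obtain ⟨a, rfl⟩ := hf b
    have : Nonempty (f ⁻¹' {f a}) := ⟨⟨a, rfl⟩⟩
    rw [← completeGraph_eq_top, induce_top]
    exact connected_top
  · obtain ⟨a₁, rfl⟩ := hf b₁
    obtain ⟨a₂, rfl⟩ := hf b₂
    simp only [top_adj]
    exact ⟨fun h => ⟨h, a₁, a₂, rfl, rfl, fun he => h (congrArg f he)⟩, fun h => h.1⟩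

theorem Function.Injective.extend_id_eq_iff {α β : Type*} {f : α → β}
    (hf : Function.Injective f) {d : β → α} {x : β} {y : α} (hy : d x ≠ y) :
    Function.extend f id d x = y ↔ x = f y := by
  by_cases hx : ∃ a, f a = x
  · obtain ⟨a, rfl⟩ := hx
    rw [hf.extend_apply, hf.eq_iff]
    rfl
  · rw [Function.extend_apply' _ _ _ hx]
    exact iff_of_false hy fun h => hx ⟨y, h.symm⟩

/-- Keeps `Sum.inl 0`, `Sum.inl 1` and every `Sum.inr (m j)`, and merges every other right vertex
into `Sum.inl 1`. -/
noncomputable def collapseOffRange (m : κ ↪ β) : Fin 2 ⊕ β → Fin 2 ⊕ κ :=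
  Function.extend (Sum.map id m) id fun _ => Sum.inl 1

theorem collapseOffRange_map (m : κ ↪ β) (y : Fin 2 ⊕ κ) :
    collapseOffRange m (Sum.map id m y) = y :=
  (Function.injective_id.sumMap m.injective).extend_apply _ _ y

theorem collapseOffRange_eq_iff (m : κ ↪ β) {y : Fin 2 ⊕ κ} (hy : y ≠ Sum.inl 1)
    (x : Fin 2 ⊕ β) : collapseOffRange m x = y ↔ x = Sum.map id m y :=
  (Function.injective_id.sumMap m.injective).extend_id_eq_iff hy.symm

theorem collapseOffRange_of_notMem_range (m : κ ↪ β) {i : β} (hi : i ∉ Set.range m) :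
    collapseOffRange m (Sum.inr i) = Sum.inl 1 := by
  refine Function.extend_apply' _ _ _ ?_
  rintro ⟨a | j, h⟩
  · simp at h
  · exact hi ⟨j, Sum.inr_injective h⟩

theorem hasParallelMinor_graphJoin_top_comap {Q : SimpleGraph (Fin 2 ⊕ β)}
    (hQ : completeBipartiteGraph (Fin 2) β ≤ Q) (m : κ ↪ β) {i₀ : β} (hi₀ : i₀ ∉ Set.range m) :
    HasParallelMinor Q (graphJoin (⊤ : SimpleGraph (Fin 2)) (Q.comap (Sum.inr ∘ m))) := by
  set c := collapseOffRange m
  have hc₀ : c (Sum.inr i₀) = Sum.inl 1 := collapseOffRange_of_notMem_range m hi₀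
  refine ⟨c, Function.LeftInverse.surjective (collapseOffRange_map m), fun y => ?_,
    fun y₁ y₂ => ⟨fun h => ⟨(graphJoin _ _).ne_of_adj h, ?_⟩, ?_⟩⟩
  · by_cases hy : y = Sum.inl 1
    · subst hy
      exact connected_induce_of_completeBipartiteGraph_le hQ
        (collapseOffRange_map m (Sum.inl 1)) hc₀
    · rw [show c ⁻¹' {y} = {Sum.map id m y} from Set.ext (collapseOffRange_eq_iff m hy),
        induce_singleton_eq_top]
      exact connected_top
  · rcases y₁ with a₁ | j₁ <;> rcases y₂ with a₂ | j₂
    · fin_cases a₁ <;> fin_cases a₂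
      · exact absurd h (⊤ : SimpleGraph (Fin 2)).irrefl
      · exact ⟨_, _, collapseOffRange_map m (Sum.inl 0), hc₀, hQ (by simp)⟩
      · exact ⟨_, _, hc₀, collapseOffRange_map m (Sum.inl 0), hQ (by simp)⟩
      · exact absurd h (⊤ : SimpleGraph (Fin 2)).irrefl
    · exact ⟨_, _, collapseOffRange_map m _, collapseOffRange_map m _, hQ (by simp)⟩
    · exact ⟨_, _, collapseOffRange_map m _, collapseOffRange_map m _, hQ (by simp)⟩
    · exact ⟨_, _, collapseOffRange_map m _, collapseOffRange_map m _, h⟩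
  · rintro ⟨hne, x₁, x₂, h₁, h₂, hx⟩
    rcases y₁ with a₁ | j₁ <;> rcases y₂ with a₂ | j₂
    · exact (top_adj a₁ a₂).mpr fun h => hne (congrArg Sum.inl h)
    · trivial
    · trivial
    · rw [collapseOffRange_eq_iff m Sum.inr_ne_inl] at h₁ h₂
      subst h₁ h₂
      exact hx

theorem hasParallelMinor_KPrime_or_top {r k : ℕ} [NeZero k] (hr : RamseyProp r (k + 1))
    {Q : SimpleGraph (Fin 2 ⊕ Fin r)} (hQ : completeBipartiteGraph (Fin 2) (Fin r) ≤ Q) :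
    HasParallelMinor Q (KPrime 2 k) ∨ HasParallelMinor Q (⊤ : SimpleGraph (Fin k)) := by
  have hminor : ∀ e : Fin (k + 1) ↪ Fin r,
      HasParallelMinor Q (graphJoin ⊤ (Q.comap (Sum.inr ∘ (Fin.succEmb k).trans e))) :=
    fun e => hasParallelMinor_graphJoin_top_comap hQ _ (i₀ := e 0) fun ⟨j, hj⟩ =>
      Fin.succ_ne_zero j (e.injective hj)
  rcases hr (Q.comap Sum.inr) with ⟨s, hs⟩ | ⟨s, hs⟩
  · let φ := topEmbeddingOfNotCliqueFree fun h => h s hs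
    have htop : Q.comap (Sum.inr ∘ (Fin.succEmb k).trans φ.toEmbedding) = ⊤ := by
      ext i j
      have := φ.map_adj_iff (v := i.succ) (w := j.succ)
      simp_all
    have h := hminor φ.toEmbedding
    rw [htop, graphJoin_top_top] at h
    exact Or.inr (h.trans (hasParallelMinor_top_of_surjective
      (f := Sum.elim (fun _ : Fin 2 => 0) id) fun j => ⟨Sum.inr j, rfl⟩))
  · let φ := topEmbeddingOfNotCliqueFree fun h => h s hs
    have hbot : Q.comap (Sum.inr ∘ (Fin.succEmb k).trans φ.toEmbedding) = ⊥ := by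
      ext i j
      have := φ.map_adj_iff (v := i.succ) (w := j.succ)
      rcases eq_or_ne i j with rfl | hij
      · simp
      · simp_all
    have h := hminor φ.toEmbedding
    rw [hbot] at h
    exact Or.inl h

end

/-- Let `k > 2` and let `r = R(k+1,k+1)` be the Ramsey number.  Every 2-connected graph with a
minor isomorphic to `K_{2,r}` contains a parallel minor isomorphic to `K'_{2,k}` or `K_k`. -/
theorem K2r_minor_gives_parallel_minor (k : ℕ) (hk : 2 < k)
    (V : Type) [Fintype V] (G : SimpleGraph V) (hG : KConnected 2 G)
    (hminor : HasMinor G (completeBipartiteGraph (Fin 2) (Fin (ramseyNumber (k + 1))))) :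
    HasParallelMinor G (KPrime 2 k) ∨
    HasParallelMinor G (⊤ : SimpleGraph (Fin k)) := by
  have : NeZero k := ⟨by omega⟩
  obtain ⟨Q, hQ, hGQ⟩ := hminor.exists_hasParallelMinor_le (hG.connected two_pos)
  exact (hasParallelMinor_KPrime_or_top (ramseyProp_ramseyNumber (k + 1)) hQ).imp
    hGQ.trans hGQ.trans
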